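/- Let ρ and σ be two well agreeing near weights on R. Then for all f ∈ R \ {0}: (1) ρ̃(f) = ρ(fg) − ρ(g) for every g ∈ M_ρ such that fg ∈ M_ρ; (2) if f ∈ M_ρ then ρ̃(f) = ρ(f) > 0, and if f ∈ U_ρ \ {0} then ρ̃(f) ≤ 0; (3) ρ̃(λ·1) = 0 for every λ ∈ F \ {0}. -/

import Mathlib

structure NearWeight (F R : Type*) [Field F] [CommRing R] [Algebra F R] where
  w : R → WithBot ℕ
  N0 : ∀ f : R, w f = ⊥ ↔ f = 0
  N1 : ∀ (c : F) (f : R), c ≠ 0 → w (c • f) = w f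
  N2 : ∀ f g : R, w (f + g) ≤ max (w f) (w g)
  N3 : ∀ f g h : R, w f < w g → w (f * h) ≤ w (g * h)
  N3' : ∀ f g h : R, w f < w g → w 1 < w h → w (f * h) < w (g * h)
  N4 : ∀ f g : R, w 1 < w f → w 1 < w g → w f = w g →
      ∃ c : F, c ≠ 0 ∧ w (f - c • g) < w f
  N5 : ∀ f g : R, w (f * g) ≤ w f + w g
  N5' : ∀ f g : R, w 1 < w f → w 1 < w g → w (f * g) = w f + w g
  norm0 : ∀ f : R, f ≠ 0 → w f ≤ w 1 → w f = 0
  normgcd : ∀ d : ℕ, (∀ f : R, w 1 < w f → ∃ k : ℕ, w f = ((d * k : ℕ) : WithBot ℕ)) → d = 1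

namespace NearWeight

variable {F R : Type*} [Field F] [CommRing R] [Algebra F R]

def U (ρ : NearWeight F R) : Set R := {r | ρ.w r ≤ ρ.w 1}

def M (ρ : NearWeight F R) : Set R := {r | ρ.w 1 < ρ.w r}

def nval (ρ : NearWeight F R) (f : R) : ℕ := WithBot.unbotD 0 (ρ.w f)

def Hset (ρ σ : NearWeight F R) (S : Set R) : Set (ℕ × ℕ) :=
  {p | ∃ f ∈ S, f ≠ 0 ∧ (ρ.nval f, σ.nval f) = p}

def WellAgreeing (ρ σ : NearWeight F R) : Prop :=
  (Hset ρ σ Set.univ)ᶜ.Finite ∧ ρ.U ∩ σ.U = Set.range (algebraMap F R)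

noncomputable def xH (ρ σ : NearWeight F R) (n : ℕ) : ℕ :=
  sInf {m | (m, n) ∈ Hset ρ σ Set.univ}

noncomputable def yH (ρ σ : NearWeight F R) (n : ℕ) : ℕ :=
  sInf {m | (n, m) ∈ Hset ρ σ Set.univ}

def lub (a b : ℕ × ℕ) : ℕ × ℕ := (max a.1 b.1, max a.2 b.2)

noncomputable def Gamma (ρ σ : NearWeight F R) : Set (ℕ × ℕ) :=
  {p | ∃ m : ℕ, p = (m, yH ρ σ m)} ∪ {p | ∃ n : ℕ, p = (xH ρ σ n, n)}

def Hbarx (ρ σ : NearWeight F R) : Set ℕ := {m | (m, 0) ∈ Hset ρ σ Set.univ}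

def Hbary (ρ σ : NearWeight F R) : Set ℕ := {n | (0, n) ∈ Hset ρ σ Set.univ}

noncomputable def GammaTilde (ρ σ : NearWeight F R) : Set (ℕ × ℕ) :=
  {p | ∃ m : ℕ, m ∉ Hbarx ρ σ ∧ p = (m, yH ρ σ m)}

def Delta (p : ℕ × ℕ) : Set (ℕ × ℕ) :=
  {q | (q.1 = p.1 ∧ q.2 < p.2) ∨ (q.2 = p.2 ∧ q.1 < p.1)}

noncomputable def tw (ρ : NearWeight F R) (f : R) : ℤ :=
  sInf {z : ℤ | ∃ g ∈ ρ.M, z = (ρ.nval (f * g) : ℤ) - (ρ.nval g : ℤ)}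

end NearWeight

variable {F R : Type*} [Field F] [CommRing R] [Algebra F R]

/-!
Multiplication is additive for `ρ` on `M_ρ` (N5') and subadditive everywhere (N5). So for
`g₀, g ∈ M_ρ` with `f g₀ ∈ M_ρ`,
`ρ(f g₀) + ρ(g) = ρ((f g₀) g) = ρ((f g) g₀) ≤ ρ(f g) + ρ(g₀)`,
i.e. `ρ(f g₀) - ρ(g₀)` is the least of the differences defining `ρ̃(f)`. The other claims follow
by a suitable choice of `g₀ ∈ M_ρ` (nonempty by the gcd normalisation): any `g₀` works for
`f ∈ M_ρ` by additivity, and for `λ • 1` because `ρ(λ g₀) = ρ(g₀)`.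
-/

namespace NearWeight

variable (ρ : NearWeight F R) {f g : R}

lemma ne_zero_of_mem_M (hg : g ∈ ρ.M) : g ≠ 0 := by
  rintro rfl
  exact not_lt_bot (((ρ.N0 0).mpr rfl) ▸ hg : ρ.w 1 < ⊥)

/-- The normalisation `gcd ρ(M) = 1` rules out `M = ∅`, since then every `d` would qualify. -/
lemma M_nonempty : ρ.M.Nonempty := by
  by_contra hM
  have h2 := ρ.normgcd 2 fun f hf => absurd ⟨f, hf⟩ hM
  norm_num at h2

lemma nontrivial (ρ : NearWeight F R) : Nontrivial R :=
  let ⟨m, hm⟩ := ρ.M_nonempty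
  ⟨⟨m, 0, ρ.ne_zero_of_mem_M hm⟩⟩

lemma w_eq_nval (hf : f ≠ 0) : ρ.w f = ρ.nval f := by
  obtain ⟨n, hn⟩ := WithBot.ne_bot_iff_exists.mp fun h => hf ((ρ.N0 f).mp h)
  rw [nval, ← hn]
  rfl

lemma nval_zero : ρ.nval 0 = 0 := by
  simp [nval, (ρ.N0 0).mpr rfl]

lemma w_one : ρ.w 1 = 0 :=
  haveI := ρ.nontrivial
  ρ.norm0 1 one_ne_zero le_rfl

lemma nval_eq_zero_of_mem_U (hf : f ∈ ρ.U) : ρ.nval f = 0 := by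
  rcases eq_or_ne f 0 with rfl | hf0
  · exact ρ.nval_zero
  · simp [nval, ρ.norm0 f hf0 hf]

lemma nval_pos_of_mem_M (hf : f ∈ ρ.M) : 0 < ρ.nval f := by
  have hlt : ρ.w 1 < ρ.w f := hf
  rw [ρ.w_one, ρ.w_eq_nval (ρ.ne_zero_of_mem_M hf)] at hlt
  exact_mod_cast hlt

lemma nval_mul_le (f g : R) : ρ.nval (f * g) ≤ ρ.nval f + ρ.nval g := by
  rcases eq_or_ne (f * g) 0 with hfg | hfg
  · simp [hfg, ρ.nval_zero]
  have h5 := ρ.N5 f g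
  rw [ρ.w_eq_nval hfg, ρ.w_eq_nval (left_ne_zero_of_mul hfg),
    ρ.w_eq_nval (right_ne_zero_of_mul hfg)] at h5
  exact_mod_cast h5

lemma w_mul_of_mem_M (hf : f ∈ ρ.M) (hg : g ∈ ρ.M) :
    ρ.w (f * g) = (ρ.nval f + ρ.nval g : ℕ) := by
  rw [ρ.N5' f g hf hg, ρ.w_eq_nval (ρ.ne_zero_of_mem_M hf),
    ρ.w_eq_nval (ρ.ne_zero_of_mem_M hg)]
  push_cast
  rfl

lemma nval_mul_of_mem_M (hf : f ∈ ρ.M) (hg : g ∈ ρ.M) :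
    ρ.nval (f * g) = ρ.nval f + ρ.nval g := by
  rw [nval, ρ.w_mul_of_mem_M hf hg]
  rfl

lemma mul_mem_M (hf : f ∈ ρ.M) (hg : g ∈ ρ.M) : f * g ∈ ρ.M := by
  show ρ.w 1 < ρ.w (f * g)
  rw [ρ.w_one, ρ.w_mul_of_mem_M hf hg]
  exact_mod_cast Nat.add_pos_left (ρ.nval_pos_of_mem_M hf) _

lemma nval_mul_add_le {g₀ : R} (hfg₀ : f * g₀ ∈ ρ.M) (hg : g ∈ ρ.M) :
    ρ.nval (f * g₀) + ρ.nval g ≤ ρ.nval (f * g) + ρ.nval g₀ :=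
  calc ρ.nval (f * g₀) + ρ.nval g = ρ.nval (f * g * g₀) := by
        rw [mul_right_comm, ρ.nval_mul_of_mem_M hfg₀ hg]
    _ ≤ ρ.nval (f * g) + ρ.nval g₀ := ρ.nval_mul_le _ _

lemma tw_eq_of_mem_M (hg : g ∈ ρ.M) (hfg : f * g ∈ ρ.M) :
    ρ.tw f = (ρ.nval (f * g) : ℤ) - ρ.nval g := by
  refine IsLeast.csInf_eq ⟨⟨g, hg, rfl⟩, ?_⟩
  rintro z ⟨g', hg', rfl⟩
  have := ρ.nval_mul_add_le hfg hg'
  omega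

lemma tw_eq_nval_of_mem_M (hf : f ∈ ρ.M) : ρ.tw f = ρ.nval f := by
  obtain ⟨m, hm⟩ := ρ.M_nonempty
  rw [ρ.tw_eq_of_mem_M hm (ρ.mul_mem_M hf hm), ρ.nval_mul_of_mem_M hf hm]
  push_cast
  ring

/-- If the defining set of `tw` is unbounded below, `sInf` on `ℤ` returns the junk value `0`. -/
lemma tw_nonpos_of_mem_U (hf : f ∈ ρ.U) : ρ.tw f ≤ 0 := by
  obtain ⟨m, hm⟩ := ρ.M_nonempty
  have hle : (ρ.nval (f * m) : ℤ) - ρ.nval m ≤ 0 := by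
    have := ρ.nval_mul_le f m
    rw [ρ.nval_eq_zero_of_mem_U hf] at this
    omega
  by_cases hbdd : BddBelow {z : ℤ | ∃ g ∈ ρ.M, z = (ρ.nval (f * g) : ℤ) - ρ.nval g}
  · exact (csInf_le hbdd ⟨m, hm, rfl⟩).trans hle
  · exact (Int.csInf_of_not_bddBelow hbdd).le

lemma tw_smul_one {c : F} (hc : c ≠ 0) : ρ.tw (c • (1 : R)) = 0 := by
  obtain ⟨m, hm⟩ := ρ.M_nonempty
  have hw : ρ.w (c • (1 : R) * m) = ρ.w m := by
    rw [smul_mul_assoc, one_mul, ρ.N1 c m hc]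
  have hM : c • (1 : R) * m ∈ ρ.M := show ρ.w 1 < _ from hw ▸ hm
  rw [ρ.tw_eq_of_mem_M hm hM, nval, nval, hw, sub_self]

end NearWeight

theorem stmt17_general
    (ρ : NearWeight F R) :
    (∀ f : R, f ≠ 0 →
      (∀ g ∈ ρ.M, f * g ∈ ρ.M →
        NearWeight.tw ρ f = (ρ.nval (f * g) : ℤ) - (ρ.nval g : ℤ)) ∧
      (f ∈ ρ.M → NearWeight.tw ρ f = (ρ.nval f : ℤ) ∧ 0 < NearWeight.tw ρ f) ∧
      (f ∈ ρ.U → NearWeight.tw ρ f ≤ 0)) ∧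
    (∀ c : F, c ≠ 0 → NearWeight.tw ρ (c • (1 : R)) = 0) := by
  refine ⟨fun f _ => ⟨fun g hg hfg => ρ.tw_eq_of_mem_M hg hfg, fun hf => ?_,
    ρ.tw_nonpos_of_mem_U⟩, fun c hc => ρ.tw_smul_one hc⟩
  rw [ρ.tw_eq_nval_of_mem_M hf]
  exact ⟨rfl, by exact_mod_cast ρ.nval_pos_of_mem_M hf⟩

theorem stmt17
    (hinj : Function.Injective (algebraMap F R))
    (hsur : ¬ Function.Surjective (algebraMap F R))
    (ρ σ : NearWeight F R) (hwa : NearWeight.WellAgreeing ρ σ) :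
    (∀ f : R, f ≠ 0 →
      (∀ g ∈ ρ.M, f * g ∈ ρ.M →
        NearWeight.tw ρ f = (ρ.nval (f * g) : ℤ) - (ρ.nval g : ℤ)) ∧
      (f ∈ ρ.M → NearWeight.tw ρ f = (ρ.nval f : ℤ) ∧ 0 < NearWeight.tw ρ f) ∧
      (f ∈ ρ.U → NearWeight.tw ρ f ≤ 0)) ∧
    (∀ c : F, c ≠ 0 → NearWeight.tw ρ (c • (1 : R)) = 0) :=
  stmt17_general ρ
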